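/- arXiv:1803.03008 — 3 statements merged into one kernel-verified Lean document; each statement's English description precedes it below -/
import Mathlib

section
/- Let X, Y ⊂ H(𝔻) be Banach spaces containing the constants and satisfying condition (I). If T: X → Y is bounded and the restriction of T to the closed unit ball B_X is continuous from the compact-open topology to the compact-open topology, then Φ_Y ∘ T ∘ Φ_X^{-1}: (*X)* → (*Y)* is weak*-to-weak* continuous, and consequently there exists a bounded operator S: *Y → *X such that T = Φ_Y^{-1} ∘ S* ∘ Φ_X. -/
noncomputable section

open Complex MeasureTheory Metric Set Filter Topology

/-- The open unit disc in `ℂ`. -/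
def uDisc : Set ℂ := Metric.ball 0 1

/-- Functions on the disc carrying the topology of uniform convergence on compact
subsets of the disc (i.e. the compact-open topology on holomorphic functions). -/
abbrev CO : Type := UniformOnFun (↥uDisc) ℂ {K : Set (↥uDisc) | IsCompact K}

/-- The canonical map sending a function on `ℂ` to its restriction to the disc,
viewed in the compact-open topology. -/
def toCO (f : ℂ → ℂ) : CO :=
  UniformOnFun.ofFun {K : Set (↥uDisc) | IsCompact K} (fun z => f z.1)

/-- The compact-open topology induced on an abstract space of analytic functions
via the inclusion `ι`. -/
def coTopOn {E : Type} (ι : E → (ℂ → ℂ)) : TopologicalSpace E :=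
  TopologicalSpace.induced (fun x => toCO (ι x)) inferInstance

/-- Condition (I): the closed unit ball is compact in the compact-open topology. -/
def CondI {E : Type} [NormedAddCommGroup E] (ι : E → (ℂ → ℂ)) : Prop :=
  IsCompact ((fun x => toCO (ι x)) '' Metric.closedBall (0 : E) 1)

/-- The norm of the evaluation functional `δ_z` on the space realized via `ι`. -/
def evalNorm {E : Type} [NormedAddCommGroup E] (ι : E → (ℂ → ℂ)) (z : ℂ) : ℝ :=
  sSup ((fun x => ‖ι x z‖) '' Metric.closedBall (0 : E) 1)

/-- Condition (II): the norms of the evaluation functionals blow up at the boundary. -/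
def CondII {E : Type} [NormedAddCommGroup E] (ι : E → (ℂ → ℂ)) : Prop :=
  ∀ M : ℝ, ∃ s : ℝ, 0 ≤ s ∧ s < 1 ∧ ∀ z ∈ uDisc, s < ‖z‖ → M < evalNorm ι z

/-- The dilation `f_r(z) = f (r z)`. -/
def dil (r : ℝ) (f : ℂ → ℂ) : ℂ → ℂ := fun z => f ((r : ℂ) * z)

/-- Condition (III): the dilation operators `T_r` act compactly on the space. -/
def CondIII {E : Type} [NormedAddCommGroup E] [NormedSpace ℂ E] (ι : E →ₗ[ℂ] (ℂ → ℂ)) : Prop :=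
  ∀ r : ℝ, 0 < r → r < 1 → ∃ T : E →L[ℂ] E,
    (∀ x : E, Set.EqOn (ι (T x)) (dil r (ι x)) uDisc) ∧ IsCompactOperator (fun x : E => T x)

/-- Condition (IV): the dilation operators `T_r` are uniformly bounded on the space. -/
def CondIV {E : Type} [NormedAddCommGroup E] [NormedSpace ℂ E] (ι : E →ₗ[ℂ] (ℂ → ℂ)) : Prop :=
  ∃ M : ℝ, ∀ r : ℝ, 0 < r → r < 1 → ∃ T : E →L[ℂ] E,
    (∀ x : E, Set.EqOn (ι (T x)) (dil r (ι x)) uDisc) ∧ ‖T‖ ≤ M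

/-- Condition (V): multiplication by a bounded analytic function `u` is bounded on the
space, with norm controlled by `‖u‖_∞`. -/
def CondV {E : Type} [NormedAddCommGroup E] [NormedSpace ℂ E] (ι : E →ₗ[ℂ] (ℂ → ℂ)) : Prop :=
  ∃ C : ℝ, 0 < C ∧ ∀ (u : ℂ → ℂ) (b : ℝ), DifferentiableOn ℂ u uDisc →
    (∀ z ∈ uDisc, ‖u z‖ ≤ b) →
    ∃ T : E →L[ℂ] E,
      (∀ x : E, Set.EqOn (ι (T x)) (fun z => u z * ι x z) uDisc) ∧ ‖T‖ ≤ C * b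

/-- The set of values `v(z)|f(z)|`, `z ∈ 𝔻`. -/
def hvSet (v : ℂ → ℝ) (f : ℂ → ℂ) : Set ℝ := (fun z => v z * ‖f z‖) '' uDisc

/-- The norm of the weighted Banach space `H_v^∞`. -/
def hvNorm (v : ℂ → ℝ) (f : ℂ → ℂ) : ℝ := sSup (hvSet v f)

/-- Membership in the weighted Banach space `H_v^∞`. -/
def memHvInf (v : ℂ → ℝ) (f : ℂ → ℂ) : Prop :=
  DifferentiableOn ℂ f uDisc ∧ BddAbove (hvSet v f)

/-- `F(z) → 0` as `|z| → 1⁻`. -/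
def vanishBd (F : ℂ → ℝ) : Prop :=
  ∀ ε : ℝ, 0 < ε → ∃ s : ℝ, 0 ≤ s ∧ s < 1 ∧ ∀ z ∈ uDisc, s < ‖z‖ → F z < ε

/-- Membership in the space `H_v^0`. -/
def memHv0 (v : ℂ → ℝ) (f : ℂ → ℂ) : Prop :=
  memHvInf v f ∧ vanishBd (fun z => v z * ‖f z‖)

/-- The set of values `v(z)|f'(z)|`, `z ∈ 𝔻`. -/
def bvSet (v : ℂ → ℝ) (f : ℂ → ℂ) : Set ℝ := (fun z => v z * ‖deriv f z‖) '' uDisc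

/-- The norm of the Bloch-type space `B_v^∞`. -/
def bvNorm (v : ℂ → ℝ) (f : ℂ → ℂ) : ℝ := ‖f 0‖ + sSup (bvSet v f)

/-- Membership in the Bloch-type space `B_v^∞`. -/
def memBvInf (v : ℂ → ℝ) (f : ℂ → ℂ) : Prop :=
  DifferentiableOn ℂ f uDisc ∧ BddAbove (bvSet v f)

/-- Membership in the little Bloch-type space `B_v^0`. -/
def memBv0 (v : ℂ → ℝ) (f : ℂ → ℂ) : Prop :=
  memBvInf v f ∧ vanishBd (fun z => v z * ‖deriv f z‖)

/-- A weight: continuous, strictly positive on `𝔻`, vanishing at the boundary. -/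
def IsWeight (v : ℂ → ℝ) : Prop :=
  ContinuousOn v uDisc ∧ (∀ z ∈ uDisc, 0 < v z) ∧ vanishBd v

/-- A normal weight. -/
def IsNormalWeight (v : ℂ → ℝ) : Prop :=
  IsWeight v ∧ (∀ z ∈ uDisc, v z = v ((‖z‖ : ℝ) : ℂ)) ∧
  (∀ r s : ℝ, 0 ≤ r → r ≤ s → s < 1 → v ((s : ℂ)) ≤ v ((r : ℂ))) ∧
  (∃ k : ℕ, 1 ≤ k ∧
    Filter.limsup (fun n : ℕ =>
        v ((((1 : ℝ) - (2 : ℝ) ^ (-(n : ℤ) - (k : ℤ)) : ℝ) : ℂ)) /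
        v ((((1 : ℝ) - (2 : ℝ) ^ (-(n : ℤ)) : ℝ) : ℂ))) Filter.atTop < 1) ∧
  (∃ M : ℝ, ∀ n : ℕ,
    v ((((1 : ℝ) - (2 : ℝ) ^ (-(n : ℤ)) : ℝ) : ℂ)) /
    v ((((1 : ℝ) - (2 : ℝ) ^ (-(n : ℤ) - 1) : ℝ) : ℂ)) ≤ M)

/-- The standard weight `v_α(z) = (1 - |z|²)^α`. -/
def stdWeight (α : ℝ) : ℂ → ℝ := fun z => (1 - ‖z‖ ^ 2) ^ α

/-- The classical Volterra operator `T_g f (w) = ∫₀^w f(ξ) g'(ξ) dξ`. -/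
def volterra (g f : ℂ → ℂ) (w : ℂ) : ℂ :=
  w * ∫ t in (0:ℝ)..1, f ((t : ℂ) * w) * deriv g ((t : ℂ) * w)

/-- The generalized Volterra operator `T_g^φ f (z) = ∫₀^{φ(z)} f(ξ) g'(ξ) dξ`. -/
def genVolterra (g φ f : ℂ → ℂ) : ℂ → ℂ := fun z => volterra g f (φ z)

/-- An analytic selfmap of the unit disc. -/
def IsSelfMap (φ : ℂ → ℂ) : Prop :=
  DifferentiableOn ℂ φ uDisc ∧ Set.MapsTo φ uDisc uDisc

/-- `E`, embedded in `H(𝔻)` by `ι`, is (isometrically) the Banach space of analytic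
functions with membership predicate `mem` and norm `nrm`. -/
def RealizesSpace {E : Type} [NormedAddCommGroup E] [NormedSpace ℂ E]
    (ι : E →ₗ[ℂ] (ℂ → ℂ)) (mem : (ℂ → ℂ) → Prop) (nrm : (ℂ → ℂ) → ℝ) : Prop :=
  (∀ x y : E, Set.EqOn (ι x) (ι y) uDisc → x = y) ∧
  (∀ x : E, mem (ι x)) ∧
  (∀ f : ℂ → ℂ, mem f → ∃ x : E, Set.EqOn (ι x) f uDisc) ∧
  (∀ x : E, ‖x‖ = nrm (ι x))

/-- The weak topology of a normed space. -/
def wkTop (Y : Type) [NormedAddCommGroup Y] [NormedSpace ℂ Y] : TopologicalSpace Y :=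
  TopologicalSpace.induced (fun y : Y => (fun ℓ : Y →L[ℂ] ℂ => ℓ y)) Pi.topologicalSpace

/-- A map between normed spaces is weakly compact if the image of the closed unit ball
is relatively compact in the weak topology. -/
def WeaklyCompactOn {X Y : Type} [NormedAddCommGroup X] [NormedAddCommGroup Y]
    [NormedSpace ℂ Y] (T : X → Y) : Prop :=
  @IsCompact Y (wkTop Y) (@closure Y (wkTop Y) (T '' Metric.closedBall (0 : X) 1))

/-- The essential norm of a bounded operator: the distance to the compact operators. -/
def essNorm {X Y : Type} [NormedAddCommGroup X] [NormedSpace ℂ X]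
    [NormedAddCommGroup Y] [NormedSpace ℂ Y] (T : X →L[ℂ] Y) : ℝ :=
  sInf {c : ℝ | ∃ K : X →L[ℂ] Y, IsCompactOperator (fun x : X => K x) ∧ c = ‖T - K‖}

/-- `limsup_{|φ(z)| → 1} F(z)` (with the convention that it is `0` when `sup |φ| < 1`). -/
def limsupAtBd (φ : ℂ → ℂ) (F : ℂ → ℝ) : ℝ :=
  sInf {M : ℝ | ∃ s : ℝ, 0 ≤ s ∧ s < 1 ∧ ∀ z ∈ uDisc, s < ‖φ z‖ → F z ≤ M}

/-- The set of integral means defining the Hardy norm. -/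
def hpSet (p : ℝ) (f : ℂ → ℂ) : Set ℝ :=
  (fun r : ℝ => (2 * Real.pi)⁻¹ *
      ∫ θ in (0:ℝ)..(2 * Real.pi),
        ‖f ((r : ℂ) * Complex.exp ((θ : ℂ) * Complex.I))‖ ^ p) '' Set.Ico (0:ℝ) 1

/-- The Hardy space norm. -/
def hpNorm (p : ℝ) (f : ℂ → ℂ) : ℝ := sSup (hpSet p f) ^ (1 / p)

/-- Membership in the Hardy space `H^p`. -/
def memHp (p : ℝ) (f : ℂ → ℂ) : Prop :=
  DifferentiableOn ℂ f uDisc ∧ BddAbove (hpSet p f)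

/-- The Bergman integrand `|f(z)|^p (1-|z|²)^α`. -/
def bergFun (p α : ℝ) (f : ℂ → ℂ) : ℂ → ℝ :=
  fun z => ‖f z‖ ^ p * (1 - ‖z‖ ^ 2) ^ α

/-- The weighted Bergman space norm (with respect to normalized area measure). -/
def bergNorm (p α : ℝ) (f : ℂ → ℂ) : ℝ :=
  (Real.pi⁻¹ * ∫ z in uDisc, bergFun p α f z) ^ (1 / p)

/-- Membership in the weighted Bergman space `A_α^p`. -/
def memBerg (p α : ℝ) (f : ℂ → ℂ) : Prop :=
  DifferentiableOn ℂ f uDisc ∧ MeasureTheory.IntegrableOn (bergFun p α f) uDisc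

/-- The associated weight `ṽ` of a weight `v`. -/
def assocWeight (v : ℂ → ℝ) (z : ℂ) : ℝ :=
  (sSup ((fun f : ℂ → ℂ => ‖f z‖) ''
    {f : ℂ → ℂ | DifferentiableOn ℂ f uDisc ∧ ∀ w ∈ uDisc, v w * ‖f w‖ ≤ 1}))⁻¹

/-- The space `H(𝔻)` of holomorphic functions on the disc, with the compact-open
topology. -/
def HolD : Type := {f : ℂ → ℂ // DifferentiableOn ℂ f uDisc}

instance : TopologicalSpace HolD :=
  TopologicalSpace.induced (fun f : HolD => toCO f.1) inferInstance

instance : Fact ((1 : ENNReal) ≤ ⊤) := ⟨le_top⟩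

/-- The sequence space `ℓ^∞`. -/
abbrev ellInf : Type := lp (fun _ : ℕ => ℂ) ⊤

/-- The Dixmier–Ng predual `*X`: functionals whose restriction to the closed unit ball
is continuous for the compact-open topology. -/
def preD {X : Type} [NormedAddCommGroup X] [NormedSpace ℂ X] (ι : X → (ℂ → ℂ)) :
    Submodule ℂ (X →L[ℂ] ℂ) where
  carrier := {ℓ : X →L[ℂ] ℂ |
    @ContinuousOn X ℂ (coTopOn ι) _ (fun x => ℓ x) (Metric.closedBall (0 : X) 1)}
  add_mem' := by
    intro a b ha hb
    letI : TopologicalSpace X := coTopOn ι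
    simp only [Set.mem_setOf_eq, ContinuousLinearMap.add_apply] at *
    exact ha.add hb
  zero_mem' := by
    letI : TopologicalSpace X := coTopOn ι
    simp only [Set.mem_setOf_eq, ContinuousLinearMap.zero_apply]
    exact continuousOn_const
  smul_mem' := by
    intro c a ha
    letI : TopologicalSpace X := coTopOn ι
    simp only [Set.mem_setOf_eq, ContinuousLinearMap.smul_apply] at *
    exact ha.const_smul c

/-! The predual operator is `S u = u ∘ T`; the point is that `u ∘ T` lies in `*X` again.
`T` maps `B_X` co-continuously into a ball `r • B_Y`, and on such a ball a functional `u ∈ *Y`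
is still co-continuous, because `u y = r * u (r⁻¹ • y)` and scalar multiplication is
co-continuous. Weak continuity of `T` is then formal: the coordinate `u` of `T x` is the
coordinate `S u` of `x`. -/
section CompactOpen

variable {E : Type} [NormedAddCommGroup E] [NormedSpace ℂ E]

lemma continuous_const_smul_coTopOn (ι : E →ₗ[ℂ] (ℂ → ℂ)) (a : ℂ) :
    @Continuous E E (coTopOn ι) (coTopOn ι) (a • ·) := by
  let _ := coTopOn ι
  have hpost : Continuous (UniformOnFun.ofFun {K : Set (↥uDisc) | IsCompact K} ∘
      ((fun w : ℂ => a • w) ∘ ·) ∘ UniformOnFun.toFun {K : Set (↥uDisc) | IsCompact K}) :=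
    (UniformOnFun.postcomp_uniformContinuous (uniformContinuous_const_smul a)).continuous
  refine continuous_induced_rng.mpr ((hpost.comp continuous_induced_dom).congr fun x => ?_)
  simp only [Function.comp_apply, map_smul]
  rfl

lemma continuousOn_closedBall_of_mem_preD (ι : E →ₗ[ℂ] (ℂ → ℂ)) {ℓ : E →L[ℂ] ℂ}
    (hℓ : ℓ ∈ preD ι) {r : ℝ} (hr : 0 < r) :
    @ContinuousOn E ℂ (coTopOn ι) _ ℓ (closedBall 0 r) := by
  let _ := coTopOn ι
  have hmaps : MapsTo ((r⁻¹ : ℂ) • ·) (closedBall (0 : E) r) (closedBall 0 1) := by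
    intro x hx
    rw [mem_closedBall_zero_iff] at hx ⊢
    rw [norm_smul, norm_inv, Complex.norm_real, Real.norm_of_nonneg hr.le]
    exact inv_mul_le_one_of_le₀ hx hr.le
  have hℓ' : ContinuousOn ℓ (closedBall 0 1) := hℓ
  have hscaled := hℓ'.comp (continuous_const_smul_coTopOn ι (r : ℂ)⁻¹).continuousOn hmaps
  refine (hscaled.const_smul (r : ℂ)).congr fun x _ => ?_
  simp [hr.ne']

end CompactOpen

section Predual

variable {X Y : Type} [NormedAddCommGroup X] [NormedSpace ℂ X]
  [NormedAddCommGroup Y] [NormedSpace ℂ Y]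

lemma comp_mem_preD (ιX : X → (ℂ → ℂ)) (ιY : Y →ₗ[ℂ] (ℂ → ℂ)) (T : X →L[ℂ] Y)
    (hT : @ContinuousOn X CO (coTopOn ιX) _ (fun x => toCO (ιY (T x))) (closedBall 0 1))
    {u : Y →L[ℂ] ℂ} (hu : u ∈ preD ιY) :
    u.comp T ∈ preD ιX := by
  let _ := coTopOn ιX
  let _ := coTopOn ιY
  have hTcont : ContinuousOn T (closedBall 0 1) :=
    (IsInducing.induced fun y => toCO (ιY y)).continuousOn_iff.mpr hT
  have hmaps : MapsTo T (closedBall 0 1) (closedBall 0 (‖T‖ + 1)) := fun x hx => by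
    rw [mem_closedBall_zero_iff] at hx ⊢
    linarith [T.unit_le_opNorm x hx]
  exact (continuousOn_closedBall_of_mem_preD ιY hu (by positivity)).comp hTcont hmaps

def preDPrecomp (ιX : X → (ℂ → ℂ)) (ιY : Y →ₗ[ℂ] (ℂ → ℂ)) (T : X →L[ℂ] Y)
    (hT : @ContinuousOn X CO (coTopOn ιX) _ (fun x => toCO (ιY (T x))) (closedBall 0 1)) :
    preD ιY →L[ℂ] preD ιX :=
  (((ContinuousLinearMap.compL ℂ X Y ℂ).flip T).comp (preD ιY).subtypeL).codRestrict (preD ιX)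
    fun u => comp_mem_preD ιX ιY T hT u.2

end Predual

lemma continuous_induced_of_eval_eq {X Y A B Z : Type*} [TopologicalSpace Z]
    {T : X → Y} {eX : X → A → Z} {eY : Y → B → Z} (S : B → A)
    (h : ∀ b x, eY (T x) b = eX x (S b)) :
    @Continuous X Y (.induced eX Pi.topologicalSpace) (.induced eY Pi.topologicalSpace) T := by
  let _ : TopologicalSpace X := .induced eX Pi.topologicalSpace
  refine continuous_induced_rng.mpr (continuous_pi fun b => ?_)
  simp only [Function.comp_apply, h]
  exact (continuous_apply (S b)).comp continuous_induced_dom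

theorem exists_predual_operator_general
    {X Y : Type} [NormedAddCommGroup X] [NormedSpace ℂ X]
    [NormedAddCommGroup Y] [NormedSpace ℂ Y]
    (ιX : X →ₗ[ℂ] (ℂ → ℂ)) (ιY : Y →ₗ[ℂ] (ℂ → ℂ))
    (T : X →L[ℂ] Y)
    (hTco : @ContinuousOn X CO (coTopOn (fun x : X => ιX x)) _
      (fun x => toCO (ιY (T x))) (Metric.closedBall (0 : X) 1)) :
    (@Continuous X Y
      (TopologicalSpace.induced
        (fun x : X => (fun ℓ : ↥(preD (fun x : X => ιX x)) => (ℓ : X →L[ℂ] ℂ) x))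
        Pi.topologicalSpace)
      (TopologicalSpace.induced
        (fun y : Y => (fun ℓ : ↥(preD (fun y : Y => ιY y)) => (ℓ : Y →L[ℂ] ℂ) y))
        Pi.topologicalSpace)
      (fun x => T x)) ∧
    (∃ S : ↥(preD (fun y : Y => ιY y)) →L[ℂ] ↥(preD (fun x : X => ιX x)),
      ∀ (u : ↥(preD (fun y : Y => ιY y))) (x : X),
        (u : Y →L[ℂ] ℂ) (T x) = ((S u : X →L[ℂ] ℂ)) x) := by
  let S := preDPrecomp ιX ιY T hTco
  have hS : ∀ (u : preD ιY) x, (u : Y →L[ℂ] ℂ) (T x) = (S u : X →L[ℂ] ℂ) x := fun _ _ => rfl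
  exact ⟨continuous_induced_of_eval_eq S hS, S, hS⟩

/-- If `X, Y ⊂ H(𝔻)` satisfy condition (I), `T : X → Y` is bounded and
`T|B_X` is co-co-continuous, then `Φ_Y ∘ T ∘ Φ_X⁻¹ : (*X)* → (*Y)*` is weak*-to-weak*
continuous (equivalently, `T` is `σ(X,*X)`-`σ(Y,*Y)` continuous), and consequently
there is a bounded operator `S : *Y → *X` with `T = Φ_Y⁻¹ ∘ S* ∘ Φ_X`, i.e.
`u (T x) = (S u) x` for all `u ∈ *Y`, `x ∈ X`. -/
theorem exists_predual_operator
    {X Y : Type} [NormedAddCommGroup X] [NormedSpace ℂ X] [CompleteSpace X]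
    [NormedAddCommGroup Y] [NormedSpace ℂ Y] [CompleteSpace Y]
    (ιX : X →ₗ[ℂ] (ℂ → ℂ)) (ιY : Y →ₗ[ℂ] (ℂ → ℂ))
    (hXinj : ∀ x y : X, Set.EqOn (ιX x) (ιX y) uDisc → x = y)
    (hYinj : ∀ x y : Y, Set.EqOn (ιY x) (ιY y) uDisc → x = y)
    (hXhol : ∀ x : X, DifferentiableOn ℂ (ιX x) uDisc)
    (hYhol : ∀ y : Y, DifferentiableOn ℂ (ιY y) uDisc)
    (hXconst : ∀ c : ℂ, ∃ x : X, Set.EqOn (ιX x) (fun _ => c) uDisc)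
    (hYconst : ∀ c : ℂ, ∃ y : Y, Set.EqOn (ιY y) (fun _ => c) uDisc)
    (hXI : CondI (fun x : X => ιX x)) (hYI : CondI (fun y : Y => ιY y))
    (T : X →L[ℂ] Y)
    (hTco : @ContinuousOn X CO (coTopOn (fun x : X => ιX x)) _
      (fun x => toCO (ιY (T x))) (Metric.closedBall (0 : X) 1)) :
    (@Continuous X Y
      (TopologicalSpace.induced
        (fun x : X => (fun ℓ : ↥(preD (fun x : X => ιX x)) => (ℓ : X →L[ℂ] ℂ) x))
        Pi.topologicalSpace)
      (TopologicalSpace.induced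
        (fun y : Y => (fun ℓ : ↥(preD (fun y : Y => ιY y)) => (ℓ : Y →L[ℂ] ℂ) y))
        Pi.topologicalSpace)
      (fun x => T x)) ∧
    (∃ S : ↥(preD (fun y : Y => ιY y)) →L[ℂ] ↥(preD (fun x : X => ιX x)),
      ∀ (u : ↥(preD (fun y : Y => ιY y))) (x : X),
        (u : Y →L[ℂ] ℂ) (T x) = ((S u : X →L[ℂ] ℂ)) x) :=
  exists_predual_operator_general ιX ιY T hTco
end
end

section
/- Let 1 ≤ p < ∞ and p − 2 < α < ∞, and set β = (2+α)/p − 1 (so β > 0). Then the classical Volterra operator T_g: A_α^p → H_{v_β}^∞ is compact if and only if lim_{|z|→1} |g′(z)| = 0, which holds if and only if g is a constant function; in particular T_g: A_α^p → H_{v_β}^∞ is compact if and only if T_g = 0. -/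
noncomputable section

open Complex MeasureTheory Metric Set Filter Topology

/-! If `T_g` is compact but `g'` does not tend to `0` at the boundary, pick `w_n ∈ 𝔻` with
`|w_n| → 1` and `|g'(w_n)| ≥ ε`, and test `T_g` on the normalized kernels
`k_w(z) = (1 - |w|²)^c (1 - w̄ z)^{-2c}`, `c = (α + 2) / p = β + 1`. The Möbius change of variables
`z = φ_w(u)` turns `‖k_w‖_{A^p_α}` into the norm of the constant `1`, while `k_w → 0` locally
uniformly as `|w| → 1`; so `T_g k_{w_n} → 0` pointwise, hence in norm by compactness. But
`(T_g k_w)' = k_w g'`, and the Cauchy estimate in `H^∞_{v_β}` gives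
`|g'(w)| = (1 - |w|²)^c |k_w(w) g'(w)| ≤ 4^c ‖T_g k_w‖`, a contradiction. Finally `g' → 0` at the
boundary forces `g' ≡ 0` by the maximum principle. -/

lemma mem_uDisc {z : ℂ} : z ∈ uDisc ↔ ‖z‖ < 1 := mem_ball_zero_iff

lemma isOpen_uDisc : IsOpen uDisc := isOpen_ball

lemma measurableSet_uDisc : MeasurableSet uDisc := measurableSet_ball

lemma ofReal_mul_mem_uDisc {z : ℂ} (hz : z ∈ uDisc) {t : ℝ} (ht : t ∈ Icc (0 : ℝ) 1) :
    (t : ℂ) * z ∈ uDisc := by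
  rw [mem_uDisc, norm_mul, Complex.norm_real, Real.norm_of_nonneg ht.1]
  exact (mul_le_of_le_one_left (norm_nonneg z) ht.2).trans_lt (mem_uDisc.1 hz)

lemma one_sub_sq_norm_pos {z : ℂ} (hz : z ∈ uDisc) : 0 < 1 - ‖z‖ ^ 2 := by
  nlinarith [mem_uDisc.1 hz, norm_nonneg z]

lemma eqOn_zero_of_vanishBd {h : ℂ → ℂ} (hh : DifferentiableOn ℂ h uDisc)
    (hv : vanishBd fun z => ‖h z‖) : EqOn h 0 uDisc := by
  intro a ha
  refine norm_le_zero_iff.1 (le_of_forall_pos_le_add fun ε hε => ?_)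
  obtain ⟨s, -, hs1, hsε⟩ := hv ε hε
  have hmax : max s ‖a‖ < 1 := max_lt hs1 (mem_uDisc.1 ha)
  set ρ := (max s ‖a‖ + 1) / 2 with hρ
  have hsρ : max s ‖a‖ < ρ := by linarith
  have hρ1 : ρ < 1 := by linarith
  have hρ0 : 0 < ρ := (norm_nonneg a).trans_lt ((le_max_right _ _).trans_lt hsρ)
  have hsphere : ∀ z ∈ frontier (ball (0 : ℂ) ρ), ‖h z‖ ≤ ε := by
    intro z hz
    rw [frontier_ball 0 hρ0.ne', mem_sphere_zero_iff_norm] at hz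
    exact (hsε z (mem_uDisc.2 (hz ▸ hρ1)) (hz ▸ (le_max_left _ _).trans_lt hsρ)).le
  have ha' : a ∈ ball (0 : ℂ) ρ := mem_ball_zero_iff.2 ((le_max_right _ _).trans_lt hsρ)
  simpa using Complex.norm_le_of_forall_mem_frontier_norm_le isBounded_ball
    (hh.mono (closure_ball_subset_closedBall.trans (closedBall_subset_ball hρ1))).diffContOnCl
    hsphere (subset_closure ha')

lemma vanishBd_norm_deriv_iff_eqOn_zero {g : ℂ → ℂ} (hg : DifferentiableOn ℂ g uDisc) :
    vanishBd (fun z => ‖deriv g z‖) ↔ EqOn (deriv g) 0 uDisc := by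
  refine ⟨eqOn_zero_of_vanishBd (hg.deriv isOpen_uDisc), fun h0 ε hε => ?_⟩
  exact ⟨0, le_rfl, zero_lt_one, fun z hz _ => by simpa [h0 hz] using hε⟩

lemma deriv_eqOn_zero_iff_forall_eq {g : ℂ → ℂ} (hg : DifferentiableOn ℂ g uDisc) :
    EqOn (deriv g) 0 uDisc ↔ ∀ z ∈ uDisc, ∀ w ∈ uDisc, g z = g w := by
  refine ⟨fun h0 z hz w hw =>
    isOpen_uDisc.is_const_of_deriv_eq_zero (convex_ball 0 1).isPreconnected hg h0 hz hw,
    fun hc z hz => ?_⟩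
  have hloc : g =ᶠ[𝓝 z] fun _ => g z :=
    eventuallyEq_of_mem (isOpen_uDisc.mem_nhds hz) fun w hw => hc w hw z hz
  simp [hloc.deriv_eq]

lemma volterra_eq_zero {g : ℂ → ℂ} (h0 : EqOn (deriv g) 0 uDisc) (f : ℂ → ℂ) {z : ℂ}
    (hz : z ∈ uDisc) : volterra g f z = 0 := by
  rw [volterra, intervalIntegral.integral_congr (g := fun _ => (0 : ℂ)),
    intervalIntegral.integral_zero, mul_zero]
  intro t ht
  rw [uIcc_of_le (zero_le_one' ℝ)] at ht
  simp [h0 (ofReal_mul_mem_uDisc hz ht)]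

lemma volterra_congr {g f₁ f₂ : ℂ → ℂ} (h : EqOn f₁ f₂ uDisc) {z : ℂ} (hz : z ∈ uDisc) :
    volterra g f₁ z = volterra g f₂ z := by
  rw [volterra, volterra, intervalIntegral.integral_congr]
  intro t ht
  rw [uIcc_of_le (zero_le_one' ℝ)] at ht
  simp only [h (ofReal_mul_mem_uDisc hz ht)]

lemma norm_volterra_le {g f : ℂ → ℂ} {z : ℂ} (hz : z ∈ uDisc) {C : ℝ}
    (hC : ∀ t ∈ Icc (0 : ℝ) 1, ‖f (t * z) * deriv g (t * z)‖ ≤ C) :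
    ‖volterra g f z‖ ≤ C := by
  have hint : ‖∫ t in (0 : ℝ)..1, f (t * z) * deriv g (t * z)‖ ≤ C := by
    simpa using intervalIntegral.norm_integral_le_of_norm_le_const fun t ht =>
      hC t (Ioc_subset_Icc_self ((uIoc_of_le (zero_le_one' ℝ)) ▸ ht))
  rw [volterra, norm_mul]
  exact (mul_le_of_le_one_left (norm_nonneg _) (mem_uDisc.1 hz).le).trans hint

lemma volterra_eq_sub_of_hasDerivAt {g f F : ℂ → ℂ}
    (hcont : ContinuousOn (fun z => f z * deriv g z) uDisc)
    (hF : ∀ z ∈ uDisc, HasDerivAt F (f z * deriv g z) z) {w : ℂ} (hw : w ∈ uDisc) :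
    volterra g f w = F w - F 0 := by
  have hmem : ∀ t ∈ uIcc (0 : ℝ) 1, (t : ℂ) * w ∈ uDisc := fun t ht =>
    ofReal_mul_mem_uDisc hw (uIcc_of_le (zero_le_one' ℝ) ▸ ht)
  have hderiv : ∀ t ∈ uIcc (0 : ℝ) 1,
      HasDerivAt (fun t : ℝ => F (t * w)) (w * (f (t * w) * deriv g (t * w))) t := fun t ht =>
    (((hF _ (hmem t ht)).comp (t : ℂ) (hasDerivAt_mul_const w)).comp_ofReal).congr_deriv
      (mul_comm _ _)
  have hint : IntervalIntegrable (fun t : ℝ => w * (f (t * w) * deriv g (t * w))) volume 0 1 :=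
    (continuousOn_const.mul (hcont.comp (by fun_prop) hmem)).intervalIntegrable
  rw [volterra, ← intervalIntegral.integral_const_mul,
    intervalIntegral.integral_eq_sub_of_hasDerivAt hderiv hint]
  simp

lemma hasDerivAt_volterra {g f : ℂ → ℂ} (hg : DifferentiableOn ℂ g uDisc)
    (hf : DifferentiableOn ℂ f uDisc) {a : ℂ} (ha : a ∈ uDisc) :
    HasDerivAt (volterra g f) (f a * deriv g a) a := by
  have hG : DifferentiableOn ℂ (fun z => f z * deriv g z) (ball 0 1) :=
    hf.mul (hg.deriv isOpen_uDisc)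
  obtain ⟨F, hF⟩ := hG.isExactOn_ball
  refine (hF a ha).sub_const (F 0) |>.congr_of_eventuallyEq ?_
  exact eventuallyEq_of_mem (isOpen_uDisc.mem_nhds ha) fun w hw =>
    volterra_eq_sub_of_hasDerivAt hG.continuousOn hF hw

section WeightedSup

variable {E : Type} [NormedAddCommGroup E] [NormedSpace ℂ E] {ι : E →ₗ[ℂ] (ℂ → ℂ)}
  {v : ℂ → ℝ}

lemma RealizesSpace.weight_mul_norm_apply_le (hE : RealizesSpace ι (memHvInf v) (hvNorm v))
    (y : E) {z : ℂ} (hz : z ∈ uDisc) : v z * ‖ι y z‖ ≤ ‖y‖ := by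
  rw [hE.2.2.2 y]
  exact le_csSup (hE.2.1 y).2 ⟨z, hz, rfl⟩

lemma RealizesSpace.continuous_apply (hE : RealizesSpace ι (memHvInf v) (hvNorm v)) {z : ℂ}
    (hz : z ∈ uDisc) (hv : 0 < v z) : Continuous fun y : E => ι y z :=
  AddMonoidHomClass.continuous_of_bound ((LinearMap.proj z).comp ι) (v z)⁻¹ fun y =>
    (le_inv_mul_iff₀ hv).2 (hE.weight_mul_norm_apply_le y hz)

lemma RealizesSpace.tendsto_zero_of_isCompactOperator {X : Type} [NormedAddCommGroup X]
    [NormedSpace ℂ X] (hE : RealizesSpace ι (memHvInf v) (hvNorm v))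
    (hv : ∀ z ∈ uDisc, 0 < v z) {T : X →L[ℂ] E} (hT : IsCompactOperator (fun x : X => T x))
    {x : ℕ → X} {R : ℝ} (hx : ∀ n, ‖x n‖ ≤ R)
    (hpt : ∀ z ∈ uDisc, Tendsto (fun n => ι (T (x n)) z) atTop (𝓝 0)) :
    Tendsto (fun n => T (x n)) atTop (𝓝 0) := by
  refine (IsCompactOperator.isCompact_closure_image_closedBall (f := (T : X →ₗ[ℂ] E)) hT R)
    |>.tendsto_nhds_of_unique_mapClusterPt (Eventually.of_forall fun n =>
      subset_closure (mem_image_of_mem _ (mem_closedBall_zero_iff.2 (hx n))))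
    fun y _ hy => hE.1 y 0 fun z hz => ?_
  obtain ⟨ψ, hψ, hlim⟩ := hy.tendsto_subseq
  have hy_lim := ((hE.continuous_apply hz (hv z hz)).tendsto y).comp hlim
  rw [map_zero]
  exact tendsto_nhds_unique hy_lim ((hpt z hz).comp hψ.tendsto_atTop)

end WeightedSup

lemma stdWeight_mul_norm_deriv_le {β M : ℝ} (hβ : 0 ≤ β) {h : ℂ → ℂ}
    (hh : DifferentiableOn ℂ h uDisc) (hM : ∀ z ∈ uDisc, stdWeight β z * ‖h z‖ ≤ M) {a : ℂ}
    (ha : a ∈ uDisc) : stdWeight (β + 1) a * ‖deriv h a‖ ≤ 4 ^ (β + 1) * M := by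
  have ha1 := mem_uDisc.1 ha
  set r := (1 - ‖a‖) / 2 with hr
  have hr0 : 0 < r := by linarith
  have hnorm : ∀ z ∈ closedBall a r, ‖z‖ ≤ (1 + ‖a‖) / 2 := fun z hz => by
    linarith [norm_le_norm_add_norm_sub' z a, mem_closedBall_iff_norm.1 hz]
  have hsub : closedBall a r ⊆ uDisc := fun z hz => mem_uDisc.2 (by linarith [hnorm z hz])
  have hsphere : ∀ z ∈ sphere a r, ‖h z‖ ≤ M / r ^ β := by
    intro z hz
    have hz' := hnorm z (sphere_subset_closedBall hz)
    have hrz : r ≤ 1 - ‖z‖ ^ 2 := by nlinarith [norm_nonneg z]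
    rw [le_div_iff₀ (by positivity), mul_comm]
    exact (mul_le_mul_of_nonneg_right (Real.rpow_le_rpow hr0.le hrz hβ) (norm_nonneg _)).trans
      (hM z (hsub (sphere_subset_closedBall hz)))
  have hcauchy := Complex.norm_deriv_le_of_forall_mem_sphere_norm_le hr0
    (hh.mono (closure_ball_subset_closedBall.trans hsub)).diffContOnCl hsphere
  have h4r : 1 - ‖a‖ ^ 2 ≤ 4 * r := by nlinarith [norm_nonneg a]
  calc stdWeight (β + 1) a * ‖deriv h a‖ ≤ (4 * r) ^ (β + 1) * (M / r ^ β / r) := by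
        unfold stdWeight
        gcongr
        nlinarith [norm_nonneg a]
    _ = 4 ^ (β + 1) * M := by
        rw [Real.mul_rpow (by norm_num) hr0.le, Real.rpow_add_one hr0.ne']
        field_simp

lemma RealizesSpace.norm_mul_deriv_le_of_eqOn_volterra {E : Type} [NormedAddCommGroup E]
    [NormedSpace ℂ E] {ι : E →ₗ[ℂ] (ℂ → ℂ)} {β : ℝ} (hβ : 0 ≤ β)
    (hE : RealizesSpace ι (memHvInf (stdWeight β)) (hvNorm (stdWeight β))) {g f : ℂ → ℂ}
    (hg : DifferentiableOn ℂ g uDisc) (hf : DifferentiableOn ℂ f uDisc) {y : E}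
    (hy : EqOn (ι y) (volterra g f) uDisc) {a : ℂ} (ha : a ∈ uDisc) :
    stdWeight (β + 1) a * ‖f a * deriv g a‖ ≤ 4 ^ (β + 1) * ‖y‖ := by
  have hderiv : deriv (ι y) a = f a * deriv g a := by
    rw [(eventuallyEq_of_mem (isOpen_uDisc.mem_nhds ha) hy).deriv_eq,
      (hasDerivAt_volterra hg hf ha).deriv]
  rw [← hderiv]
  exact stdWeight_mul_norm_deriv_le hβ (hE.2.1 y).1
    (fun z hz => hE.weight_mul_norm_apply_le y hz) ha

section Mobius

open ComplexConjugate

def mobius (w u : ℂ) : ℂ := (w - u) / (1 - conj w * u)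

variable {w u : ℂ}

lemma norm_conj_mul_lt_one (hw : w ∈ uDisc) (hu : u ∈ uDisc) : ‖conj w * u‖ < 1 := by
  rw [norm_mul, Complex.norm_conj]
  exact mul_lt_one_of_nonneg_of_lt_one_left (norm_nonneg _) (mem_uDisc.1 hw) (mem_uDisc.1 hu).le

lemma one_sub_conj_mul_ne_zero (hw : w ∈ uDisc) (hu : u ∈ uDisc) : 1 - conj w * u ≠ 0 :=
  sub_ne_zero.2 fun h => by simpa [← h] using norm_conj_mul_lt_one hw hu

lemma one_sub_conj_mul_mem_slitPlane (hw : w ∈ uDisc) (hu : u ∈ uDisc) :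
    1 - conj w * u ∈ slitPlane := by
  refine Or.inl ?_
  rw [Complex.sub_re, Complex.one_re, sub_pos]
  exact (Complex.re_le_norm _).trans_lt (norm_conj_mul_lt_one hw hu)

lemma one_sub_norm_le_norm_one_sub_conj_mul (hw : w ∈ uDisc) (u : ℂ) :
    1 - ‖u‖ ≤ ‖1 - conj w * u‖ := by
  have h : ‖conj w * u‖ ≤ ‖u‖ := by
    rw [norm_mul, Complex.norm_conj]
    exact mul_le_of_le_one_left (norm_nonneg _) (mem_uDisc.1 hw).le
  linarith [norm_sub_norm_le (1 : ℂ) (conj w * u), norm_one (α := ℂ)]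

lemma sq_norm_one_sub_conj_mul_sub_sq_norm_sub (w u : ℂ) :
    ‖1 - conj w * u‖ ^ 2 - ‖w - u‖ ^ 2 = (1 - ‖w‖ ^ 2) * (1 - ‖u‖ ^ 2) := by
  simp only [Complex.sq_norm, Complex.normSq_apply, Complex.sub_re, Complex.sub_im,
    Complex.one_re, Complex.one_im, Complex.mul_re, Complex.mul_im, Complex.conj_re,
    Complex.conj_im]
  ring

lemma one_sub_sq_norm_mobius (hw : w ∈ uDisc) (hu : u ∈ uDisc) :
    1 - ‖mobius w u‖ ^ 2 = (1 - ‖w‖ ^ 2) * (1 - ‖u‖ ^ 2) / ‖1 - conj w * u‖ ^ 2 := by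
  have hq : ‖1 - conj w * u‖ ^ 2 ≠ 0 := by
    simpa using one_sub_conj_mul_ne_zero hw hu
  rw [mobius, norm_div, div_pow, eq_div_iff hq, sub_mul, div_mul_cancel₀ _ hq, one_mul,
    sq_norm_one_sub_conj_mul_sub_sq_norm_sub]

lemma mobius_mem_uDisc (hw : w ∈ uDisc) (hu : u ∈ uDisc) : mobius w u ∈ uDisc := by
  have hpos : 0 < 1 - ‖mobius w u‖ ^ 2 := by
    rw [one_sub_sq_norm_mobius hw hu]
    exact div_pos (mul_pos (one_sub_sq_norm_pos hw) (one_sub_sq_norm_pos hu))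
      (pow_pos (norm_pos_iff.2 (one_sub_conj_mul_ne_zero hw hu)) 2)
  rw [mem_uDisc]
  nlinarith [norm_nonneg (mobius w u)]

lemma one_sub_conj_mul_mobius (hw : w ∈ uDisc) (hu : u ∈ uDisc) :
    1 - conj w * mobius w u = ((1 - ‖w‖ ^ 2 : ℝ) : ℂ) / (1 - conj w * u) := by
  have hq := one_sub_conj_mul_ne_zero hw hu
  rw [mobius, eq_div_iff hq]
  push_cast
  field_simp
  linear_combination -Complex.conj_mul' w

lemma mobius_mobius (hw : w ∈ uDisc) (hu : u ∈ uDisc) : mobius w (mobius w u) = u := by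
  have hq := one_sub_conj_mul_ne_zero hw hu
  have hA : ((1 - ‖w‖ ^ 2 : ℝ) : ℂ) ≠ 0 := Complex.ofReal_ne_zero.2 (one_sub_sq_norm_pos hw).ne'
  have hq' : 1 - u * conj w ≠ 0 := by rwa [mul_comm]
  rw [mobius, one_sub_conj_mul_mobius hw hu, div_eq_iff (div_ne_zero hA hq), mobius]
  push_cast at hA ⊢
  field_simp
  linear_combination -u * Complex.conj_mul' w

lemma mobius_image_uDisc (hw : w ∈ uDisc) : mobius w '' uDisc = uDisc :=
  Subset.antisymm (image_subset_iff.2 fun _ hu => mobius_mem_uDisc hw hu)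
    fun z hz => ⟨mobius w z, mobius_mem_uDisc hw hz, mobius_mobius hw hz⟩

lemma injOn_mobius (hw : w ∈ uDisc) : InjOn (mobius w) uDisc := fun u hu u' hu' h => by
  rw [← mobius_mobius hw hu, h, mobius_mobius hw hu']

lemma hasDerivAt_mobius (hw : w ∈ uDisc) (hu : u ∈ uDisc) :
    HasDerivAt (mobius w) (((‖w‖ ^ 2 - 1 : ℝ) : ℂ) / (1 - conj w * u) ^ 2) u := by
  have hq := one_sub_conj_mul_ne_zero hw hu
  refine ((hasDerivAt_id u).const_sub w |>.div
    ((hasDerivAt_id u).const_mul (conj w) |>.const_sub 1) hq).congr_deriv ?_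
  simp only [id]
  push_cast
  field_simp
  linear_combination Complex.conj_mul' w

lemma norm_deriv_mobius (hw : w ∈ uDisc) (hu : u ∈ uDisc) :
    ‖deriv (mobius w) u‖ = (1 - ‖w‖ ^ 2) / ‖1 - conj w * u‖ ^ 2 := by
  rw [(hasDerivAt_mobius hw hu).deriv, norm_div, norm_pow, Complex.norm_real,
    Real.norm_of_nonpos (by linarith [one_sub_sq_norm_pos hw]), neg_sub]

lemma det_restrictScalars_toSpanSingleton (c : ℂ) :
    ((ContinuousLinearMap.toSpanSingleton ℂ c).restrictScalars ℝ).det = ‖c‖ ^ 2 := by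
  rw [ContinuousLinearMap.det, ContinuousLinearMap.coe_restrictScalars,
    LinearMap.det_restrictScalars, ← ContinuousLinearMap.det,
    ContinuousLinearMap.det_toSpanSingleton, Algebra.norm_complex_apply, Complex.normSq_eq_norm_sq]

lemma hasFDerivWithinAt_mobius (hw : w ∈ uDisc) (hu : u ∈ uDisc) :
    HasFDerivWithinAt (mobius w)
      ((ContinuousLinearMap.toSpanSingleton ℂ (deriv (mobius w) u)).restrictScalars ℝ) uDisc u :=
  ((hasDerivAt_mobius hw hu).differentiableAt.hasDerivAt.hasFDerivAt.restrictScalars ℝ)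
    |>.hasFDerivWithinAt

variable {F : Type} [NormedAddCommGroup F] [NormedSpace ℝ F]

lemma integrableOn_uDisc_iff_mobius (hw : w ∈ uDisc) (f : ℂ → F) :
    IntegrableOn f uDisc ↔
      IntegrableOn (fun u => ‖deriv (mobius w) u‖ ^ 2 • f (mobius w u)) uDisc := by
  have := integrableOn_image_iff_integrableOn_abs_det_fderiv_smul volume measurableSet_uDisc
    (fun u hu => hasFDerivWithinAt_mobius hw hu) (injOn_mobius hw) f
  simpa only [mobius_image_uDisc hw, det_restrictScalars_toSpanSingleton, abs_pow, abs_norm]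
    using this

lemma setIntegral_uDisc_mobius (hw : w ∈ uDisc) (f : ℂ → F) :
    ∫ z in uDisc, f z = ∫ u in uDisc, ‖deriv (mobius w) u‖ ^ 2 • f (mobius w u) := by
  have := integral_image_eq_integral_abs_det_fderiv_smul volume measurableSet_uDisc
    (fun u hu => hasFDerivWithinAt_mobius hw hu) (injOn_mobius hw) f
  simpa only [mobius_image_uDisc hw, det_restrictScalars_toSpanSingleton, abs_pow, abs_norm]
    using this

end Mobius

lemma integrableOn_one_sub_sq_norm_rpow {α : ℝ} (hα : -1 < α) :
    IntegrableOn (fun u : ℂ => (1 - ‖u‖ ^ 2) ^ α) uDisc := by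
  rw [uDisc, integrableOn_fun_norm_addHaar volume (f := fun y : ℝ => (1 - y ^ 2) ^ α),
    Complex.finrank_real_complex]
  have hα1 : 0 < α + 1 := by linarith
  refine IntegrableOn.mono_set (intervalIntegral.integrableOn_deriv_of_nonneg
      (g := fun y => -(1 - y ^ 2) ^ (α + 1) / (2 * (α + 1))) ?_ (fun y hy => ?_) (fun y hy => ?_))
    Ioo_subset_Ioc_self
  · exact ((continuousOn_const.sub (continuousOn_id.pow 2)).rpow_const
      fun _ _ => Or.inr hα1.le).neg.div_const _
  · have hy0 : 1 - y ^ 2 ≠ 0 := by nlinarith [hy.1, hy.2]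
    refine ((hasDerivAt_pow 2 y).const_sub 1 |>.rpow_const (Or.inl hy0)).neg.div_const _
      |>.congr_deriv ?_
    simp only [Nat.cast_ofNat, add_sub_cancel_right, smul_eq_mul]
    field_simp
  · exact smul_nonneg (pow_nonneg hy.1.le _) (Real.rpow_nonneg (by nlinarith [hy.1, hy.2]) _)

section Kernel

open ComplexConjugate

def normalizedKernel (c : ℝ) (w z : ℂ) : ℂ :=
  ((1 - ‖w‖ ^ 2) ^ c : ℝ) * (1 - conj w * z) ^ ((-2 * c : ℝ) : ℂ)

variable {c : ℝ} {w z : ℂ}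

lemma differentiableOn_normalizedKernel (c : ℝ) (hw : w ∈ uDisc) :
    DifferentiableOn ℂ (normalizedKernel c w) uDisc := fun z hz =>
  ((((hasDerivAt_id z).const_mul (conj w)).const_sub 1).cpow_const
    (one_sub_conj_mul_mem_slitPlane hw hz)).differentiableAt.const_mul _ |>.differentiableWithinAt

lemma norm_normalizedKernel (hw : w ∈ uDisc) (z : ℂ) :
    ‖normalizedKernel c w z‖ = ((1 - ‖w‖ ^ 2) / ‖1 - conj w * z‖ ^ 2) ^ c := by
  have hA := (one_sub_sq_norm_pos hw).le
  rw [normalizedKernel, norm_mul, Complex.norm_real, Real.norm_of_nonneg (Real.rpow_nonneg hA _),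
    Complex.norm_cpow_real, div_eq_mul_inv, Real.mul_rpow hA (by positivity),
    Real.inv_rpow (by positivity), ← Real.rpow_neg (by positivity),
    ← Real.rpow_natCast_mul (norm_nonneg _)]
  norm_num

lemma stdWeight_mul_norm_normalizedKernel_self (hw : w ∈ uDisc) :
    stdWeight c w * ‖normalizedKernel c w w‖ = 1 := by
  have hA := one_sub_sq_norm_pos hw
  have hself : ‖1 - conj w * w‖ = 1 - ‖w‖ ^ 2 := by
    rw [Complex.conj_mul', ← Complex.ofReal_pow, ← Complex.ofReal_one, ← Complex.ofReal_sub,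
      Complex.norm_real, Real.norm_of_nonneg hA.le]
  rw [stdWeight, norm_normalizedKernel hw w, hself, ← Real.mul_rpow hA.le (by positivity)]
  field_simp
  exact Real.one_rpow c

lemma norm_normalizedKernel_le (hc : 0 ≤ c) (hw : w ∈ uDisc) (hz : z ∈ uDisc) :
    ‖normalizedKernel c w z‖ ≤ ((1 - ‖w‖ ^ 2) / (1 - ‖z‖) ^ 2) ^ c := by
  have hz1 : 0 < 1 - ‖z‖ := by linarith [mem_uDisc.1 hz]
  have hA := (one_sub_sq_norm_pos hw).le
  rw [norm_normalizedKernel hw z]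
  exact Real.rpow_le_rpow (by positivity) (div_le_div_of_nonneg_left hA
    (by positivity) (pow_le_pow_left₀ hz1.le (one_sub_norm_le_norm_one_sub_conj_mul hw z) 2)) hc

lemma norm_normalizedKernel_mobius (hw : w ∈ uDisc) (hu : u ∈ uDisc) :
    ‖normalizedKernel c w (mobius w u)‖ = (‖1 - conj w * u‖ ^ 2 / (1 - ‖w‖ ^ 2)) ^ c := by
  have hA := one_sub_sq_norm_pos hw
  have hq := norm_pos_iff.2 (one_sub_conj_mul_ne_zero hw hu)
  rw [norm_normalizedKernel hw, one_sub_conj_mul_mobius hw hu, norm_div,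
    Complex.norm_real, Real.norm_of_nonneg hA.le]
  congr 1
  field_simp

lemma sq_norm_deriv_mobius_mul_bergFun_normalizedKernel {p α : ℝ} (hp : 0 < p)
    (hw : w ∈ uDisc) (hu : u ∈ uDisc) :
    ‖deriv (mobius w) u‖ ^ 2 * bergFun p α (normalizedKernel ((α + 2) / p) w) (mobius w u) =
      (1 - ‖u‖ ^ 2) ^ α := by
  have hA := one_sub_sq_norm_pos hw
  have hB := one_sub_sq_norm_pos hu
  have hQ := pow_pos (norm_pos_iff.2 (one_sub_conj_mul_ne_zero hw hu)) 2
  set A := 1 - ‖w‖ ^ 2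
  set Q := ‖1 - conj w * u‖ ^ 2
  rw [bergFun, norm_deriv_mobius hw hu, norm_normalizedKernel_mobius hw hu,
    one_sub_sq_norm_mobius hw hu, ← Real.rpow_mul (by positivity), div_mul_cancel₀ _ hp.ne']
  calc (A / Q) ^ 2 * ((Q / A) ^ (α + 2) * (A * (1 - ‖u‖ ^ 2) / Q) ^ α)
      = ((A / Q) * (Q / A)) ^ 2 * ((Q / A) * (A * (1 - ‖u‖ ^ 2) / Q)) ^ α := by
        rw [Real.rpow_add (by positivity), Real.rpow_two,
          Real.mul_rpow (by positivity) (by positivity)]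
        ring
    _ = (1 - ‖u‖ ^ 2) ^ α := by
        field_simp

end Kernel

section Bergman

variable {p α : ℝ} {w : ℂ}

lemma bergNorm_congr {f₁ f₂ : ℂ → ℂ} (h : EqOn f₁ f₂ uDisc) :
    bergNorm p α f₁ = bergNorm p α f₂ := by
  unfold bergNorm
  congr 2
  exact setIntegral_congr_fun measurableSet_uDisc fun z hz => by simp only [bergFun, h hz]

lemma memBerg_normalizedKernel (hp : 0 < p) (hα : -1 < α) (hw : w ∈ uDisc) :
    memBerg p α (normalizedKernel ((α + 2) / p) w) :=
  ⟨differentiableOn_normalizedKernel _ hw, (integrableOn_uDisc_iff_mobius hw _).2 <|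
    (integrableOn_one_sub_sq_norm_rpow hα).congr_fun (fun _ hu =>
      (sq_norm_deriv_mobius_mul_bergFun_normalizedKernel hp hw hu).symm) measurableSet_uDisc⟩

lemma bergNorm_normalizedKernel (hp : 0 < p) (hw : w ∈ uDisc) :
    bergNorm p α (normalizedKernel ((α + 2) / p) w) = bergNorm p α 1 := by
  rw [bergNorm, bergNorm, setIntegral_uDisc_mobius hw (bergFun p α _)]
  congr 2
  refine setIntegral_congr_fun measurableSet_uDisc fun u hu => ?_
  rw [smul_eq_mul, sq_norm_deriv_mobius_mul_bergFun_normalizedKernel hp hw hu, bergFun]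
  simp

end Bergman

lemma norm_volterra_normalizedKernel_le {g : ℂ → ℂ} {c M : ℝ} (hc : 0 ≤ c) {w z : ℂ}
    (hw : w ∈ uDisc) (hz : z ∈ uDisc) (hM : ∀ ζ ∈ closedBall (0 : ℂ) ‖z‖, ‖deriv g ζ‖ ≤ M) :
    ‖volterra g (normalizedKernel c w) z‖ ≤ ((1 - ‖w‖ ^ 2) / (1 - ‖z‖) ^ 2) ^ c * M := by
  refine norm_volterra_le hz fun t ht => ?_
  have htz := ofReal_mul_mem_uDisc hz ht
  have hnorm : ‖(t : ℂ) * z‖ ≤ ‖z‖ := by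
    rw [norm_mul, Complex.norm_real, Real.norm_of_nonneg ht.1]
    exact mul_le_of_le_one_left (norm_nonneg z) ht.2
  have hz1 : 0 < 1 - ‖z‖ := by linarith [mem_uDisc.1 hz]
  have hA := (one_sub_sq_norm_pos hw).le
  rw [norm_mul]
  refine mul_le_mul ((norm_normalizedKernel_le hc hw htz).trans ?_)
    (hM _ (mem_closedBall_zero_iff.2 hnorm)) (norm_nonneg _) (by positivity)
  exact Real.rpow_le_rpow (by positivity)
    (div_le_div_of_nonneg_left hA (by positivity) (by gcongr)) hc

lemma tendsto_volterra_normalizedKernel {g : ℂ → ℂ} (hg : DifferentiableOn ℂ g uDisc) {c : ℝ}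
    (hc : 0 < c) {w : ℕ → ℂ} (hw : ∀ n, w n ∈ uDisc)
    (hlim : Tendsto (fun n => ‖w n‖) atTop (𝓝 1)) {z : ℂ} (hz : z ∈ uDisc) :
    Tendsto (fun n => volterra g (normalizedKernel c (w n)) z) atTop (𝓝 0) := by
  obtain ⟨M, hM⟩ := (isCompact_closedBall (0 : ℂ) ‖z‖).exists_bound_of_continuousOn
    ((hg.deriv isOpen_uDisc).continuousOn.mono (closedBall_subset_ball (mem_uDisc.1 hz)))
  have hbound : Tendsto (fun n => ((1 - ‖w n‖ ^ 2) / (1 - ‖z‖) ^ 2) ^ c * M) atTop (𝓝 0) := by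
    have := (((hlim.pow 2).const_sub 1).div_const ((1 - ‖z‖) ^ 2)).rpow_const (Or.inr hc.le)
      |>.mul_const M
    simpa [Real.zero_rpow hc.ne'] using this
  exact squeeze_zero_norm (fun n => norm_volterra_normalizedKernel_le hc.le (hw n) hz hM) hbound

lemma exists_seq_of_not_vanishBd {F : ℂ → ℝ} (hF : ¬ vanishBd F) :
    ∃ ε > 0, ∃ w : ℕ → ℂ, (∀ n, w n ∈ uDisc) ∧ Tendsto (fun n => ‖w n‖) atTop (𝓝 1) ∧
      ∀ n, ε ≤ F (w n) := by
  rw [vanishBd] at hF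
  push Not at hF
  obtain ⟨ε, hε, hF⟩ := hF
  have hs : ∀ n : ℕ, (0 : ℝ) ≤ n / (n + 1) ∧ (n : ℝ) / (n + 1) < 1 := fun n =>
    ⟨by positivity, (div_lt_one (by positivity)).2 (lt_add_one _)⟩
  choose w hwD hw using fun n => hF _ (hs n).1 (hs n).2
  refine ⟨ε, hε, w, hwD, ?_, fun n => (hw n).2⟩
  exact tendsto_of_tendsto_of_tendsto_of_le_of_le (tendsto_natCast_div_add_atTop 1)
    tendsto_const_nhds (fun n => (hw n).1.le) fun n => (mem_uDisc.1 (hwD n)).le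

lemma deriv_eqOn_zero_of_volterra_one_eq_zero {g : ℂ → ℂ} (hg : DifferentiableOn ℂ g uDisc)
    (h : ∀ z ∈ uDisc, volterra g (fun _ => 1) z = 0) : EqOn (deriv g) 0 uDisc := by
  intro a ha
  have hzero : HasDerivAt (volterra g fun _ => 1) 0 a :=
    (hasDerivAt_const a 0).congr_of_eventuallyEq (eventuallyEq_of_mem (isOpen_uDisc.mem_nhds ha) h)
  simpa using (hasDerivAt_volterra hg (differentiableOn_const 1) ha).unique hzero

lemma vanishBd_norm_deriv_of_isCompactOperator {X E : Type} [NormedAddCommGroup X]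
    [NormedSpace ℂ X] [NormedAddCommGroup E] [NormedSpace ℂ E] {p α : ℝ} (hp : 0 < p)
    (hα : -1 < α) (hpα : p ≤ α + 2) {ιX : X →ₗ[ℂ] (ℂ → ℂ)}
    (hX : RealizesSpace ιX (memBerg p α) (bergNorm p α)) {ιE : E →ₗ[ℂ] (ℂ → ℂ)}
    (hE : RealizesSpace ιE (memHvInf (stdWeight ((2 + α) / p - 1)))
      (hvNorm (stdWeight ((2 + α) / p - 1))))
    {g : ℂ → ℂ} (hg : DifferentiableOn ℂ g uDisc) {T : X →L[ℂ] E}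
    (hT : ∀ x, EqOn (ιE (T x)) (volterra g (ιX x)) uDisc)
    (hTc : IsCompactOperator (fun x : X => T x)) :
    vanishBd (fun z => ‖deriv g z‖) := by
  set c := (α + 2) / p with hc
  have hc1 : 1 ≤ c := (one_le_div hp).2 hpα
  have hβ : (2 + α) / p - 1 + 1 = c := by rw [hc]; ring
  by_contra hv
  obtain ⟨ε, hε, w, hwD, hw1, hwε⟩ := exists_seq_of_not_vanishBd hv
  choose x hx using fun n => hX.2.2.1 _ (memBerg_normalizedKernel hp hα (hwD n))
  have hTx : ∀ n, EqOn (ιE (T (x n))) (volterra g (normalizedKernel c (w n))) uDisc :=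
    fun n z hz => (hT (x n) hz).trans (volterra_congr (hx n) hz)
  have hnull : Tendsto (fun n => T (x n)) atTop (𝓝 0) :=
    hE.tendsto_zero_of_isCompactOperator
      (fun z hz => Real.rpow_pos_of_pos (one_sub_sq_norm_pos hz) _) hTc
      (fun n => (hX.2.2.2 (x n)).trans (bergNorm_congr (hx n)) |>.trans
        (bergNorm_normalizedKernel hp (hwD n)) |>.le)
      fun z hz => (tendsto_volterra_normalizedKernel hg (by linarith) hwD hw1 hz).congr
        fun n => (hTx n hz).symm
  have hlower : ∀ n, ε ≤ 4 ^ c * ‖T (x n)‖ := fun n => by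
    have h := hE.norm_mul_deriv_le_of_eqOn_volterra (by linarith) hg
      (differentiableOn_normalizedKernel c (hwD n)) (hTx n) (hwD n)
    rw [hβ, norm_mul, ← mul_assoc, stdWeight_mul_norm_normalizedKernel_self (hwD n),
      one_mul] at h
    exact (hwε n).trans h
  have := ge_of_tendsto' (by simpa using hnull.norm.const_mul (4 ^ c)) hlower
  linarith

theorem volterra_Bergman_compact_iff_zero_general
    {X E : Type} [NormedAddCommGroup X] [NormedSpace ℂ X]
    [NormedAddCommGroup E] [NormedSpace ℂ E]
    (p α : ℝ) (hp : 1 ≤ p) (hα : p - 2 < α)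
    (ιX : X →ₗ[ℂ] (ℂ → ℂ)) (hX : RealizesSpace ιX (memBerg p α) (bergNorm p α))
    (ιE : E →ₗ[ℂ] (ℂ → ℂ))
    (hE : RealizesSpace ιE (memHvInf (stdWeight ((2 + α) / p - 1)))
      (hvNorm (stdWeight ((2 + α) / p - 1))))
    (g : ℂ → ℂ) (hg : DifferentiableOn ℂ g uDisc) :
    ((∃ T : X →L[ℂ] E, (∀ x : X, Set.EqOn (ιE (T x)) (volterra g (ιX x)) uDisc) ∧
        IsCompactOperator (fun x : X => T x)) ↔
      vanishBd (fun z => ‖deriv g z‖)) ∧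
    (vanishBd (fun z => ‖deriv g z‖) ↔ ∀ z ∈ uDisc, ∀ w ∈ uDisc, g z = g w) ∧
    ((∃ T : X →L[ℂ] E, (∀ x : X, Set.EqOn (ιE (T x)) (volterra g (ιX x)) uDisc) ∧
        IsCompactOperator (fun x : X => T x)) ↔
      ∀ f : ℂ → ℂ, DifferentiableOn ℂ f uDisc → ∀ z ∈ uDisc, volterra g f z = 0) := by
  have hvanish := vanishBd_norm_deriv_iff_eqOn_zero hg
  have hcompact : (∃ T : X →L[ℂ] E, (∀ x : X, EqOn (ιE (T x)) (volterra g (ιX x)) uDisc) ∧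
      IsCompactOperator (fun x : X => T x)) ↔ EqOn (deriv g) 0 uDisc := by
    refine ⟨fun ⟨T, hT, hTc⟩ => hvanish.1 ?_,
      fun h0 => ⟨0, fun x z hz => ?_, isCompactOperator_zero⟩⟩
    · exact vanishBd_norm_deriv_of_isCompactOperator (by linarith) (by linarith) (by linarith)
        hX hE hg hT hTc
    · simp [volterra_eq_zero h0 _ hz]
  have hzero : EqOn (deriv g) 0 uDisc ↔
      ∀ f : ℂ → ℂ, DifferentiableOn ℂ f uDisc → ∀ z ∈ uDisc, volterra g f z = 0 :=
    ⟨fun h0 f _ z hz => volterra_eq_zero h0 f hz,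
      fun h => deriv_eqOn_zero_of_volterra_one_eq_zero hg (h _ (differentiableOn_const 1))⟩
  exact ⟨hcompact.trans hvanish.symm, hvanish.trans (deriv_eqOn_zero_iff_forall_eq hg),
    hcompact.trans hzero⟩

/-- For `1 ≤ p < ∞`, `p - 2 < α` and `β = (2+α)/p - 1`, the Volterra
operator `T_g : A_α^p → H_{v_β}^∞` is compact iff `lim_{|z|→1} |g'(z)| = 0`, iff `g` is
constant on `𝔻`, iff `T_g = 0`. -/
theorem volterra_Bergman_compact_iff_zero
    {X E : Type} [NormedAddCommGroup X] [NormedSpace ℂ X] [CompleteSpace X]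
    [NormedAddCommGroup E] [NormedSpace ℂ E] [CompleteSpace E]
    (p α : ℝ) (hp : 1 ≤ p) (hα : p - 2 < α)
    (ιX : X →ₗ[ℂ] (ℂ → ℂ)) (hX : RealizesSpace ιX (memBerg p α) (bergNorm p α))
    (ιE : E →ₗ[ℂ] (ℂ → ℂ))
    (hE : RealizesSpace ιE (memHvInf (stdWeight ((2 + α) / p - 1)))
      (hvNorm (stdWeight ((2 + α) / p - 1))))
    (g : ℂ → ℂ) (hg : DifferentiableOn ℂ g uDisc) :
    ((∃ T : X →L[ℂ] E, (∀ x : X, Set.EqOn (ιE (T x)) (volterra g (ιX x)) uDisc) ∧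
        IsCompactOperator (fun x : X => T x)) ↔
      vanishBd (fun z => ‖deriv g z‖)) ∧
    (vanishBd (fun z => ‖deriv g z‖) ↔ ∀ z ∈ uDisc, ∀ w ∈ uDisc, g z = g w) ∧
    ((∃ T : X →L[ℂ] E, (∀ x : X, Set.EqOn (ιE (T x)) (volterra g (ιX x)) uDisc) ∧
        IsCompactOperator (fun x : X => T x)) ↔
      ∀ f : ℂ → ℂ, DifferentiableOn ℂ f uDisc → ∀ z ∈ uDisc, volterra g f z = 0) :=
  volterra_Bergman_compact_iff_zero_general p α hp hα ιX hX ιE hE g hg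
end
end

section
/- Let φ be an analytic selfmap of 𝔻, g ∈ H(𝔻), and let v be a normal weight. If limsup_{|φ(z)|→1} (1−|z|) v(z) |(g∘φ)′(z)| = 0 (interpreted as automatically satisfied when sup_z |φ(z)| < 1), then limsup_{|z|→1} (1−|z|) v(z) |(g∘φ)′(z)| = 0. -/
noncomputable section

open Complex MeasureTheory Metric Set Filter Topology

theorem ball_subset_uDisc (z : ℂ) : ball z (1 - ‖z‖) ⊆ uDisc :=
  ball_subset_ball' (by rw [dist_zero_right]; linarith)

theorem IsCompact.exists_bound_norm_deriv {U K : Set ℂ} {g : ℂ → ℂ} (hK : IsCompact K)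
    (hg : DifferentiableOn ℂ g U) (hU : IsOpen U) (hKU : K ⊆ U) :
    ∃ C, 0 ≤ C ∧ ∀ w ∈ K, ‖deriv g w‖ ≤ C := by
  obtain ⟨C, hC⟩ := hK.exists_bound_of_continuousOn
    ((hg.analyticOnNhd hU).deriv.continuousOn.mono hKU)
  exact ⟨max C 0, le_max_right _ _, fun w hw => (hC w hw).trans (le_max_left _ _)⟩

namespace IsSelfMap

variable {φ : ℂ → ℂ}

theorem norm_deriv_le (hφ : IsSelfMap φ) {z : ℂ} (hz : z ∈ uDisc) :
    ‖deriv φ z‖ ≤ 2 / (1 - ‖z‖) := by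
  have hz1 : 0 < 1 - ‖z‖ := sub_pos.mpr (mem_ball_zero_iff.mp hz)
  refine Complex.norm_deriv_le_div_of_mapsTo_ball (hφ.1.mono (ball_subset_uDisc z))
    (fun w hw => ?_) hz1
  have hw := hφ.2 (ball_subset_uDisc z hw)
  have hφz := hφ.2 hz
  rw [uDisc, mem_ball] at hw hφz
  rw [mem_closedBall]
  linarith [dist_triangle_right (φ w) (φ z) 0]

theorem mul_norm_deriv_comp_le (hφ : IsSelfMap φ) {g : ℂ → ℂ}
    (hg : DifferentiableOn ℂ g uDisc) {z : ℂ} (hz : z ∈ uDisc) :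
    (1 - ‖z‖) * ‖deriv (fun u => g (φ u)) z‖ ≤ 2 * ‖deriv g (φ z)‖ := by
  have hz1 : 0 < 1 - ‖z‖ := sub_pos.mpr (mem_ball_zero_iff.mp hz)
  change (1 - ‖z‖) * ‖deriv (g ∘ φ) z‖ ≤ _
  rw [deriv_comp z (hg.differentiableAt (isOpen_ball.mem_nhds (hφ.2 hz)))
    (hφ.1.differentiableAt (isOpen_ball.mem_nhds hz)), norm_mul]
  calc (1 - ‖z‖) * (‖deriv g (φ z)‖ * ‖deriv φ z‖)
      = ‖deriv g (φ z)‖ * ((1 - ‖z‖) * ‖deriv φ z‖) := by ring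
    _ ≤ ‖deriv g (φ z)‖ * 2 := by
        gcongr
        exact (le_div_iff₀' hz1).mp (hφ.norm_deriv_le hz)
    _ = 2 * ‖deriv g (φ z)‖ := mul_comm _ _

end IsSelfMap

/-- For a normal weight `v`, if
`limsup_{|φ(z)|→1} (1-|z|) v(z) |(g∘φ)'(z)| = 0` then
`limsup_{|z|→1} (1-|z|) v(z) |(g∘φ)'(z)| = 0`. -/
theorem limsup_at_boundary_of_limsup_at_phi_boundary
    (φ g : ℂ → ℂ) (hφ : IsSelfMap φ) (hg : DifferentiableOn ℂ g uDisc)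
    (v : ℂ → ℝ) (hv : IsNormalWeight v)
    (h : ∀ ε : ℝ, 0 < ε → ∃ s : ℝ, 0 ≤ s ∧ s < 1 ∧ ∀ z ∈ uDisc,
      s < ‖φ z‖ →
        (1 - ‖z‖) * v z * ‖deriv (fun u => g (φ u)) z‖ < ε) :
    ∀ ε : ℝ, 0 < ε → ∃ s : ℝ, 0 ≤ s ∧ s < 1 ∧ ∀ z ∈ uDisc,
      s < ‖z‖ →
        (1 - ‖z‖) * v z * ‖deriv (fun u => g (φ u)) z‖ < ε := by
  obtain ⟨-, hv_pos, hv_vanish⟩ := hv.1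
  intro ε hε
  obtain ⟨s₀, -, hs₀, h_far⟩ := h ε hε
  obtain ⟨C, hC, hg'⟩ := (isCompact_closedBall 0 s₀).exists_bound_norm_deriv hg
    isOpen_ball (closedBall_subset_ball hs₀)
  obtain ⟨s, hs0, hs1, hvs⟩ := hv_vanish (ε / (2 * C + 1)) (by positivity)
  refine ⟨s, hs0, hs1, fun z hz hzs => ?_⟩
  rcases lt_or_ge s₀ ‖φ z‖ with hφz | hφz
  · exact h_far z hz hφz
  -- On `{|φ| ≤ s₀}` the factor `(1 - |z|) |(g ∘ φ)'(z)|` is bounded, and `v → 0` does the rest.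
  have h_near : (1 - ‖z‖) * ‖deriv (fun u => g (φ u)) z‖ ≤ 2 * C :=
    (hφ.mul_norm_deriv_comp_le hg hz).trans
      (by gcongr; exact hg' _ (mem_closedBall_zero_iff.mpr hφz))
  calc (1 - ‖z‖) * v z * ‖deriv (fun u => g (φ u)) z‖
      = v z * ((1 - ‖z‖) * ‖deriv (fun u => g (φ u)) z‖) := by ring
    _ ≤ v z * (2 * C + 1) := by gcongr; exacts [(hv_pos z hz).le, by linarith]
    _ < ε / (2 * C + 1) * (2 * C + 1) := by gcongr; exact hvs z hz hzs
    _ = ε := div_mul_cancel₀ ε (by positivity)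
end
end
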